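/- Let n ≥ 3 and let 𝒜 be an invertible 2^{n−1} × 2^{n−1} complex matrix with entries a_{I,J} indexed by binary strings I = (i₂,…,i_n), J = (j₂,…,j_n) ∈ {0,1}^{n−1}. Let 𝒱 ⊆ (ℂ²)^{⊗n} be the orthogonal complement of the span of the vectors (1,α) ⊗ 𝒜(Σ_J α^{j₂2^{n−2}+⋯+j_n2⁰}|J⟩) over all α ∈ ℂ. For a bipartition of the parties {A₁,…,A_n} into S|S̄ with |S| = k (1 ≤ k ≤ n−1), other than {A₁}|{A₂,…,A_n}, let σ be the permutation of (1,…,n) listing first the indices in S in increasing order and then those in S̄ in increasing order, and for a tuple β = (β_K)_{K∈{0,1}^k} define the matrix 𝒳_σ(β) with rows indexed by M ∈ {0,1}^{n−k}, columns indexed by p ∈ {0,1,…,2^{n−1}}, and entries [𝒳_σ(β)]_{M,p} = Σ β_{(i_{σ(1)},…,i_{σ(k)})} · a_{(i₂,…,i_n),(j₂,…,j_n)}, where the sum is over all i₁,…,i_n, j₂,…,j_n ∈ {0,1} satisfying i₁ + j₂2^{n−2} + ⋯ + j_n2⁰ = p and (i_{σ(k+1)},…,i_{σ(n)}) = M. Then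 𝒱 is a genuinely entangled subspace of dimension 2^{n−1} − 1 if and only if, for every such bipartition and every nonzero tuple β, the matrix 𝒳_σ(β) has rank 2^{n−k}. -/

import Mathlib

/-!
Expanding in powers of `α`, the spanning vector `(1,α) ⊗ 𝒜(Σ_J α^{binExp J}|J⟩)` is `Σ_p α^p w_p`
for `2ⁿ + 1` fixed vectors `w_p`; since a polynomial vanishing on all of `ℂ` is zero, `𝒱` is the
orthogonal complement of the span of the `w_p`. These are linearly independent when `𝒜` is
invertible, so `dim 𝒱 = 2ⁿ⁺¹ - (2ⁿ + 1)`.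

A product vector `φ ⊗ χ` lies in `𝒱` iff `⟪w_p, φ ⊗ χ⟫ = 0` for all `p`, i.e. iff `χ̄` lies in the
left kernel of `𝒳_σ(φ̄)`. Hence `𝒱` contains no product vector across `S|S̄` iff every `𝒳_σ(β)`,
`β ≠ 0`, has linearly independent rows. For `S = {A₁}` (and its mirror image) this holds
automatically: a left-kernel vector `χ` of `𝒳_σ(β)` gives `(β₀ + β₁x) · U(x) = 0`, where
`U = Σ_J (χ𝒜)_J x^{binExp J}`, so `U = 0`, and then `χ = 0` because `𝒜` is invertible.
-/

noncomputable section

def IsBiproduct {n : ℕ} {d : Fin n → ℕ} (S : Finset (Fin n))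
    (ψ : EuclideanSpace ℂ (∀ i, Fin (d i))) : Prop :=
  ∃ (φ : (∀ i : {i // i ∈ S}, Fin (d i.1)) → ℂ)
    (χ : (∀ i : {i // i ∉ S}, Fin (d i.1)) → ℂ),
    ∀ f : ∀ i, Fin (d i), ψ f = φ (fun i => f i.1) * χ (fun i => f i.1)

def IsGME {n : ℕ} {d : Fin n → ℕ} (ψ : EuclideanSpace ℂ (∀ i, Fin (d i))) : Prop :=
  ψ ≠ 0 ∧ ∀ S : Finset (Fin n), S.Nonempty → S ≠ Finset.univ → ¬ IsBiproduct S ψ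

def IsGES {n : ℕ} {d : Fin n → ℕ}
    (V : Submodule ℂ (EuclideanSpace ℂ (∀ i, Fin (d i)))) : Prop :=
  ∀ ψ ∈ V, ψ ≠ 0 → IsGME ψ

/-- The exponent `j₂2^{n-2} + ⋯ + j_n2⁰` attached to a binary string
`J = (j₂,…,j_n) ∈ {0,1}^{n-1}` (here the string has length `n`, indexed by `Fin n`). -/
def binExp (n : ℕ) (J : Fin n → Fin 2) : ℕ :=
  ∑ t : Fin n, (J t : ℕ) * 2 ^ (n - 1 - (t : ℕ))

/-- The vectors `(1,α) ⊗ 𝒜(Σ_J α^{binExp J}|J⟩)` spanning `𝒱^⊥`; the parties are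
`A₁,…,A_{n+1}`, indexed by `Fin (n+1)`, and `𝒜` acts on the last `n` of them. -/
def spanningVec (n : ℕ) (A : Matrix (Fin n → Fin 2) (Fin n → Fin 2) ℂ) (α : ℂ) :
    EuclideanSpace ℂ (Fin (n + 1) → Fin 2) :=
  WithLp.toLp 2 (fun f => ![(1 : ℂ), α] (f 0) *
    A.mulVec (fun J => α ^ binExp n J) (fun t => f t.succ))

/-- The matrix `𝒳_σ(β)` of Eq. (7) for the bipartition `S|S̄`: rows are indexed by
binary strings `M` on `S̄`, columns by `p ∈ {0,…,2^n}`, and the entry is the sum of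
`β_{i|_S} · a_{(i₂,…,i_{n+1}),J}` over all global binary strings `i` and all `J` with
`i₁ + binExp J = p` and `i|_{S̄} = M`. -/
def Xmat (n : ℕ) (A : Matrix (Fin n → Fin 2) (Fin n → Fin 2) ℂ)
    (S : Finset (Fin (n + 1))) (β : ({i // i ∈ S} → Fin 2) → ℂ) :
    Matrix ({i // i ∉ S} → Fin 2) (Fin (2 ^ n + 1)) ℂ :=
  fun M p =>
    ∑ i : Fin (n + 1) → Fin 2, ∑ J : Fin n → Fin 2,
      if (i 0 : ℕ) + binExp n J = (p : ℕ) ∧ (fun s : {i // i ∉ S} => i s.1) = M then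
        β (fun s : {i // i ∈ S} => i s.1) * A (fun t => i t.succ) J
      else 0

open Polynomial in
theorem Submodule.span_range_sum_pow_smul {K E : Type*} [Field K] [Infinite K] [AddCommGroup E]
    [Module K E] {N : ℕ} (v : Fin N → E) :
    span K (Set.range fun α : K => ∑ p : Fin N, α ^ (p : ℕ) • v p) = span K (Set.range v) := by
  refine le_antisymm (span_le.2 ?_) (span_le.2 ?_)
  · rintro _ ⟨α, rfl⟩
    exact sum_mem fun p _ => smul_mem _ _ (subset_span ⟨p, rfl⟩)
  · rintro _ ⟨q, rfl⟩
    by_contra hq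
    obtain ⟨f, hfq, hf⟩ := exists_dual_map_eq_bot_of_notMem hq inferInstance
    have hP : ∑ p : Fin N, C (f (v p)) * X ^ (p : ℕ) = 0 := Polynomial.funext fun α => by
      have h := mem_map_of_mem (f := f) (subset_span (Set.mem_range_self α) :
        ∑ p : Fin N, α ^ (p : ℕ) • v p ∈ span K (Set.range fun α : K => ∑ p : Fin N, α ^ (p : ℕ) • v p))
      rw [hf, mem_bot, map_sum] at h
      simp only [map_smul, smul_eq_mul] at h
      simp only [eval_finsetSum, eval_mul, eval_C, eval_pow, eval_X, eval_zero, ← h]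
      exact Finset.sum_congr rfl fun p _ => mul_comm _ _
    apply hfq
    simpa [finsetSum_coeff, coeff_C_mul_X_pow, Fin.val_inj] using congr_arg (coeff · q) hP

theorem Submodule.mem_orthogonal_span_range_iff {𝕜 E ι : Type*} [RCLike 𝕜] [NormedAddCommGroup E]
    [InnerProductSpace 𝕜 E] (v : ι → E) (ψ : E) :
    ψ ∈ (span 𝕜 (Set.range v))ᗮ ↔ ∀ i, inner 𝕜 (v i) ψ = 0 := by
  rw [← span_singleton_le_iff_mem, ← isOrtho_iff_le, isOrtho_comm, isOrtho_iff_le, span_le]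
  simp [Set.range_subset_iff, mem_orthogonal_singleton_iff_inner_left]

theorem Matrix.rank_eq_card_iff {K m n : Type*} [Field K] [Fintype m] [Fintype n]
    (M : Matrix m n K) : M.rank = Fintype.card m ↔ ∀ v, vecMul v M = 0 → v = 0 := by
  rw [rank_eq_finrank_span_row, ← Set.finrank, eq_comm,
    ← linearIndependent_iff_card_eq_finrank_span, ← vecMul_injective_iff, ← coe_vecMulLinear,
    injective_iff_map_eq_zero]
  rfl

theorem Fin.sum_ite_eq_val {M : Type*} [AddCommMonoid M] {N c : ℕ} (hc : c < N) (g : Fin N → M) :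
    ∑ p : Fin N, (if c = p then g p else 0) = g ⟨c, hc⟩ := by
  simp_rw [show ∀ p : Fin N, c = p ↔ ⟨c, hc⟩ = p from fun p => by rw [Fin.ext_iff]]
  simp

/-- Coefficientwise, this says that `(a + b X) * U = 0` forces `U = 0`. -/
theorem eq_zero_of_mul_succ_add_mul_eq_zero {R : Type*} [Semiring R] [NoZeroDivisors R] {a b : R}
    (hab : a ≠ 0 ∨ b ≠ 0) {u : ℕ → R} (h0 : a * u 0 = 0)
    (hsucc : ∀ k, a * u (k + 1) + b * u k = 0) : u = 0 := by
  by_cases ha : a = 0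
  · have hb := hab.resolve_left (not_not.2 ha)
    exact funext fun k => by simpa [ha, hb] using hsucc k
  · refine funext fun k => ?_
    induction k with
    | zero => simpa [ha] using h0
    | succ k ih => simpa [ih, ha] using hsucc k

section Biproduct

variable {n : ℕ} {d : Fin n → ℕ} {S : Finset (Fin n)}

theorem IsBiproduct.compl {ψ : EuclideanSpace ℂ (∀ i, Fin (d i))} (h : IsBiproduct S ψ) :
    IsBiproduct Sᶜ ψ := by
  obtain ⟨φ, χ, hψ⟩ := h
  refine ⟨fun g => χ fun s => g ⟨s, Finset.mem_compl.2 s.2⟩,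
    fun g => φ fun s => g ⟨s, fun h => Finset.mem_compl.1 h s.2⟩, fun f => ?_⟩
  rw [hψ, mul_comm]

variable (S) in
def pureTensor (φ : (∀ i : {i // i ∈ S}, Fin (d i.1)) → ℂ)
    (χ : (∀ i : {i // i ∉ S}, Fin (d i.1)) → ℂ) : EuclideanSpace ℂ (∀ i, Fin (d i)) :=
  WithLp.toLp 2 fun f => φ (fun i => f i.1) * χ (fun i => f i.1)

theorem isBiproduct_iff_exists_eq_pureTensor {ψ : EuclideanSpace ℂ (∀ i, Fin (d i))} :
    IsBiproduct S ψ ↔ ∃ φ χ, ψ = pureTensor S φ χ :=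
  exists₂_congr fun _ _ => ⟨fun h => PiLp.ext h, fun h _ => h ▸ rfl⟩

theorem pureTensor_eq_zero_iff {φ : (∀ i : {i // i ∈ S}, Fin (d i.1)) → ℂ}
    {χ : (∀ i : {i // i ∉ S}, Fin (d i.1)) → ℂ} :
    pureTensor S φ χ = 0 ↔ φ = 0 ∨ χ = 0 := by
  refine ⟨fun h => ?_, by rintro (rfl | rfl) <;> ext <;> simp [pureTensor]⟩
  by_contra! hne
  obtain ⟨g, hg⟩ := Function.ne_iff.1 hne.1
  obtain ⟨k, hk⟩ := Function.ne_iff.1 hne.2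
  let e := Equiv.piEquivPiSubtypeProd (· ∈ S) fun i => Fin (d i)
  have hfS : (fun i : {i // i ∈ S} => e.symm (g, k) i.1) = g :=
    congr_arg Prod.fst (e.apply_symm_apply (g, k))
  have hfSc : (fun i : {i // i ∉ S} => e.symm (g, k) i.1) = k :=
    congr_arg Prod.snd (e.apply_symm_apply (g, k))
  have := congr_arg (· (e.symm (g, k))) h
  simp only [pureTensor, PiLp.toLp_apply, PiLp.zero_apply, hfS, hfSc] at this
  exact mul_ne_zero hg hk this

end Biproduct

/-- `binExp` reads the string with its most significant digit first, hence the reversal. -/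
def binEquiv (n : ℕ) : (Fin n → Fin 2) ≃ Fin (2 ^ n) :=
  (Equiv.arrowCongr Fin.revPerm (Equiv.refl (Fin 2))).trans finFunctionFinEquiv

theorem binEquiv_apply_val (n : ℕ) (J : Fin n → Fin 2) : (binEquiv n J : ℕ) = binExp n J := by
  rw [binExp, ← Equiv.sum_comp Fin.revPerm]
  simp only [binEquiv, Equiv.trans_apply, Equiv.arrowCongr_apply, finFunctionFinEquiv_apply,
    Equiv.coe_refl, Function.comp, id]
  refine Finset.sum_congr rfl fun t _ => ?_
  rw [Fin.revPerm_apply, Fin.val_rev]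
  congr 2
  omega

theorem binExp_lt (n : ℕ) (J : Fin n → Fin 2) : binExp n J < 2 ^ n :=
  binEquiv_apply_val n J ▸ (binEquiv n J).isLt

theorem binExp_injective (n : ℕ) : Function.Injective (binExp n) := fun J J' h =>
  (binEquiv n).injective <| Fin.ext <| by rw [binEquiv_apply_val, binEquiv_apply_val, h]

theorem exists_binExp_eq {n k : ℕ} (hk : k < 2 ^ n) : ∃ J, binExp n J = k :=
  ⟨(binEquiv n).symm ⟨k, hk⟩, by rw [← binEquiv_apply_val, Equiv.apply_symm_apply]⟩

theorem add_binExp_lt {n : ℕ} (i : Fin 2) (J : Fin n → Fin 2) :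
    (i : ℕ) + binExp n J < 2 ^ n + 1 := by
  have := binExp_lt n J
  omega

theorem exists_add_binExp_eq {n k : ℕ} (hk : k ≤ 2 ^ n) :
    ∃ (i : Fin 2) (J : Fin n → Fin 2), (i : ℕ) + binExp n J = k := by
  rcases hk.lt_or_eq with hk | rfl
  · obtain ⟨J, hJ⟩ := exists_binExp_eq hk
    exact ⟨0, J, by simpa⟩
  · obtain ⟨J, hJ⟩ := exists_binExp_eq (Nat.sub_lt (Nat.two_pow_pos n) one_pos)
    exact ⟨1, J, by rw [hJ, Fin.val_one]; have := Nat.two_pow_pos n; omega⟩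

theorem eq_zero_of_forall_sum_add_binExp_eq_zero {n : ℕ} {b : Fin 2 → ℂ} (hb : b ≠ 0)
    {y : (Fin n → Fin 2) → ℂ}
    (h : ∀ p : Fin (2 ^ n + 1), ∑ i, b i * ∑ J, (if (i : ℕ) + binExp n J = p then y J else 0) = 0) :
    y = 0 := by
  -- `u k` is the coefficient of `X ^ k` in `Σ_J y_J X ^ binExp J`
  set u : ℕ → ℂ := fun k => ∑ J, if binExp n J = k then y J else 0
  have hu : u = 0 := by
    refine eq_zero_of_mul_succ_add_mul_eq_zero (a := b 0) (b := b 1) ?_ ?_ fun k => ?_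
    · by_contra! h01
      exact hb (funext fun i => by fin_cases i <;> simp [h01])
    · simpa [Fin.sum_univ_two, u] using h 0
    · by_cases hk : k < 2 ^ n
      · simpa [Fin.sum_univ_two, u, add_comm 1] using h ⟨k + 1, by omega⟩
      · have hlarge : ∀ k', 2 ^ n ≤ k' → u k' = 0 := fun k' hk' =>
          Finset.sum_eq_zero fun J _ => if_neg (by have := binExp_lt n J; omega)
        rw [hlarge k (by omega), hlarge (k + 1) (by omega), mul_zero, mul_zero, add_zero]
  funext J
  simpa [u, (binExp_injective n).eq_iff] using congr_fun hu (binExp n J)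

def restrictSucc {n : ℕ} (m : Fin n → Fin 2) : {i : Fin (n + 1) // i ∉ ({0} : Finset _)} → Fin 2 :=
  fun s => m (s.1.pred (Finset.notMem_singleton.1 s.2))

theorem restrict_cons_eq_restrictSucc {n : ℕ} (i : Fin 2) (m : Fin n → Fin 2) :
    (fun s : {i : Fin (n + 1) // i ∉ ({0} : Finset _)} => (Fin.cons i m : Fin (n + 1) → Fin 2) s.1) =
      restrictSucc m := by
  funext s
  conv_lhs => rw [← Fin.succ_pred s.1 (Finset.notMem_singleton.1 s.2)]
  rw [Fin.cons_succ, restrictSucc]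

theorem restrictSucc_surjective {n : ℕ} : Function.Surjective (restrictSucc (n := n)) := fun M =>
  ⟨fun t => M ⟨t.succ, by simp [Fin.succ_ne_zero]⟩, funext fun s => by simp [restrictSucc]⟩

section SpanningCoeff

variable {n : ℕ} (A : Matrix (Fin n → Fin 2) (Fin n → Fin 2) ℂ)

def spanningCoeff (p : Fin (2 ^ n + 1)) : EuclideanSpace ℂ (Fin (n + 1) → Fin 2) :=
  WithLp.toLp 2 fun f => ∑ J, if (f 0 : ℕ) + binExp n J = p then A (fun t => f t.succ) J else 0

theorem spanningVec_eq_sum (α : ℂ) :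
    spanningVec n A α = ∑ p : Fin (2 ^ n + 1), α ^ (p : ℕ) • spanningCoeff A p := by
  ext f
  have h1α : ∀ i : Fin 2, ![(1 : ℂ), α] i = α ^ (i : ℕ) := by intro i; fin_cases i <;> simp
  simp only [spanningVec, h1α, Matrix.mulVec, dotProduct, Finset.mul_sum, spanningCoeff,
    WithLp.ofLp_sum, WithLp.ofLp_smul, Finset.sum_apply, Pi.smul_apply, smul_eq_mul, mul_ite,
    mul_zero]
  rw [Finset.sum_comm]
  refine Finset.sum_congr rfl fun J _ => ?_
  rw [Fin.sum_ite_eq_val (add_binExp_lt (f 0) J) fun p => α ^ (p : ℕ) * _, pow_add]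
  ring

theorem span_range_spanningVec :
    Submodule.span ℂ (Set.range (spanningVec n A)) =
      Submodule.span ℂ (Set.range (spanningCoeff A)) := by
  rw [← Submodule.span_range_sum_pow_smul, funext (spanningVec_eq_sum A)]

theorem spanningCoeff_cons (p : Fin (2 ^ n + 1)) (i : Fin 2) (m : Fin n → Fin 2) :
    spanningCoeff A p (Fin.cons i m) = ∑ J, if (i : ℕ) + binExp n J = p then A m J else 0 := by
  simp [spanningCoeff]

theorem linearIndependent_spanningCoeff (hA : IsUnit A.det) :
    LinearIndependent ℂ (spanningCoeff A) := by
  rw [Fintype.linearIndependent_iff]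
  intro g hg
  have hinj := Matrix.mulVec_injective_iff_isUnit.2 ((Matrix.isUnit_iff_isUnit_det A).2 hA)
  have hvanish (i : Fin 2) (J : Fin n → Fin 2) : g ⟨i + binExp n J, add_binExp_lt i J⟩ = 0 := by
    refine congr_fun (hinj (?_ : A.mulVec (fun J => g ⟨_, add_binExp_lt i J⟩) = A.mulVec 0)) J
    funext m
    have := congr_arg (· (Fin.cons i m)) hg
    simp only [WithLp.ofLp_sum, WithLp.ofLp_smul, Finset.sum_apply, Pi.smul_apply,
      spanningCoeff_cons, smul_eq_mul, Finset.mul_sum, mul_ite, mul_zero, PiLp.zero_apply] at this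
    rw [Matrix.mulVec_zero, Pi.zero_apply, ← this, Finset.sum_comm]
    refine Finset.sum_congr rfl fun J' _ => ?_
    rw [Fin.sum_ite_eq_val (add_binExp_lt i J') fun p => g p * _, mul_comm]
  intro p
  obtain ⟨i, J, hp⟩ := exists_add_binExp_eq (Nat.lt_succ_iff.1 p.isLt)
  obtain rfl : ⟨_, add_binExp_lt i J⟩ = p := Fin.ext hp
  exact hvanish i J

theorem finrank_orthogonal_span_range_spanningCoeff (hA : IsUnit A.det) :
    Module.finrank ℂ (Submodule.span ℂ (Set.range (spanningCoeff A)))ᗮ = 2 ^ n - 1 := by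
  have h := (Submodule.span ℂ (Set.range (spanningCoeff A))).finrank_add_finrank_orthogonal
  rw [finrank_span_eq_card (linearIndependent_spanningCoeff A hA), finrank_euclideanSpace] at h
  simp only [Fintype.card_fin, Fintype.card_fun, pow_succ] at h
  omega

theorem vecMul_Xmat (S : Finset (Fin (n + 1))) (β : ({i // i ∈ S} → Fin 2) → ℂ)
    (χ : ({i // i ∉ S} → Fin 2) → ℂ) (p : Fin (2 ^ n + 1)) :
    Matrix.vecMul χ (Xmat n A S β) p =
      ∑ f, β (fun s => f s.1) * χ (fun s => f s.1) * spanningCoeff A p f := by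
  simp only [Matrix.vecMul, dotProduct, Xmat, spanningCoeff, PiLp.toLp_apply, Finset.mul_sum]
  rw [Finset.sum_comm]
  refine Finset.sum_congr rfl fun f _ => ?_
  rw [Finset.sum_comm]
  refine Finset.sum_congr rfl fun J _ => ?_
  by_cases hc : (f 0 : ℕ) + binExp n J = p
  · simp only [hc, true_and, if_true, mul_ite, mul_zero, Finset.sum_ite_eq, Finset.mem_univ]
    ring
  · simp [hc]

theorem star_vecMul_Xmat (S : Finset (Fin (n + 1))) (β : ({i // i ∈ S} → Fin 2) → ℂ)
    (χ : ({i // i ∉ S} → Fin 2) → ℂ) (p : Fin (2 ^ n + 1)) :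
    star (Matrix.vecMul χ (Xmat n A S β) p) =
      inner ℂ (spanningCoeff A p) (pureTensor S (star β) (star χ)) := by
  rw [vecMul_Xmat, star_sum, PiLp.inner_apply]
  refine Finset.sum_congr rfl fun f _ => ?_
  simp [pureTensor]

theorem exists_isBiproduct_iff_vecMul_Xmat_eq_zero (S : Finset (Fin (n + 1))) :
    (∃ ψ ∈ (Submodule.span ℂ (Set.range (spanningCoeff A)))ᗮ, ψ ≠ 0 ∧ IsBiproduct S ψ) ↔
      ∃ β ≠ 0, ∃ χ ≠ 0, Matrix.vecMul χ (Xmat n A S β) = 0 := by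
  simp_rw [Submodule.mem_orthogonal_span_range_iff, isBiproduct_iff_exists_eq_pureTensor]
  constructor
  · rintro ⟨_, hψV, hψ, φ, χ, rfl⟩
    rw [Ne, pureTensor_eq_zero_iff, not_or] at hψ
    refine ⟨star φ, star_ne_zero.2 hψ.1, star χ, star_ne_zero.2 hψ.2, funext fun p => ?_⟩
    rw [Pi.zero_apply, ← star_eq_zero, star_vecMul_Xmat, star_star, star_star, hψV]
  · rintro ⟨β, hβ, χ, hχ, hX⟩
    refine ⟨pureTensor S (star β) (star χ), fun p => ?_, ?_, star β, star χ, rfl⟩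
    · rw [← star_vecMul_Xmat, hX, Pi.zero_apply, star_zero]
    · rw [Ne, pureTensor_eq_zero_iff, star_eq_zero, star_eq_zero]
      tauto

theorem vecMul_Xmat_singleton_zero (β : ({i // i ∈ ({0} : Finset (Fin (n + 1)))} → Fin 2) → ℂ)
    (χ : ({i // i ∉ ({0} : Finset (Fin (n + 1)))} → Fin 2) → ℂ) (p : Fin (2 ^ n + 1)) :
    Matrix.vecMul χ (Xmat n A {0} β) p =
      ∑ i, β (fun _ => i) *
        ∑ J, if (i : ℕ) + binExp n J = p then Matrix.vecMul (χ ∘ restrictSucc) A J else 0 := by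
  rw [vecMul_Xmat, ← (Fin.consEquiv fun _ => Fin 2).sum_comp, Fintype.sum_prod_type]
  refine Finset.sum_congr rfl fun i _ => ?_
  have hS (m : Fin n → Fin 2) :
      (fun s : {i' // i' ∈ ({0} : Finset (Fin (n + 1)))} =>
        (Fin.cons i m : Fin (n + 1) → Fin 2) s.1) = fun _ => i :=
    funext fun s => by rw [Finset.mem_singleton.1 s.2, Fin.cons_zero]
  simp only [Fin.consEquiv, Equiv.coe_fn_mk, hS, restrict_cons_eq_restrictSucc, spanningCoeff_cons,
    mul_assoc, ← Finset.mul_sum, Matrix.vecMul, dotProduct, Function.comp]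
  congr 1
  simp only [Finset.mul_sum, mul_ite, mul_zero]
  exact Finset.sum_comm.trans (Finset.sum_congr rfl fun J _ => by split_ifs <;> simp)

theorem eq_zero_of_vecMul_Xmat_singleton_zero_eq_zero (hA : IsUnit A.det)
    {β : ({i // i ∈ ({0} : Finset (Fin (n + 1)))} → Fin 2) → ℂ} (hβ : β ≠ 0)
    {χ : ({i // i ∉ ({0} : Finset (Fin (n + 1)))} → Fin 2) → ℂ}
    (h : Matrix.vecMul χ (Xmat n A {0} β) = 0) : χ = 0 := by
  have hb : (fun i : Fin 2 => β fun _ => i) ≠ 0 := by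
    obtain ⟨g, hg⟩ := Function.ne_iff.1 hβ
    have hg0 : (fun _ => g ⟨0, Finset.mem_singleton_self 0⟩) = g :=
      funext fun s => congr_arg g (Subtype.ext (Finset.mem_singleton.1 s.2).symm)
    refine Function.ne_iff.2 ⟨g ⟨0, Finset.mem_singleton_self 0⟩, ?_⟩
    show β _ ≠ 0
    rwa [hg0]
  have hy := eq_zero_of_forall_sum_add_binExp_eq_zero hb fun p => by
    rw [← vecMul_Xmat_singleton_zero, h, Pi.zero_apply]
  have hinj := Matrix.vecMul_injective_iff_isUnit.2 ((Matrix.isUnit_iff_isUnit_det A).2 hA)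
  have hχ : χ ∘ restrictSucc = 0 := hinj (hy.trans (Matrix.zero_vecMul A).symm)
  funext M
  obtain ⟨m, rfl⟩ := restrictSucc_surjective M
  exact congr_fun hχ m

theorem not_isBiproduct_singleton_zero (hA : IsUnit A.det)
    {ψ : EuclideanSpace ℂ (Fin (n + 1) → Fin 2)}
    (hψV : ψ ∈ (Submodule.span ℂ (Set.range (spanningCoeff A)))ᗮ) (hψ : ψ ≠ 0) :
    ¬ IsBiproduct {0} ψ := fun hbi => by
  obtain ⟨β, hβ, χ, hχ, hX⟩ := (exists_isBiproduct_iff_vecMul_Xmat_eq_zero A {0}).1 ⟨ψ, hψV, hψ, hbi⟩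
  exact hχ (eq_zero_of_vecMul_Xmat_singleton_zero_eq_zero A hA hβ hX)

end SpanningCoeff

theorem GES_iff_Xmat_full_rank_general (n : ℕ)
    (A : Matrix (Fin n → Fin 2) (Fin n → Fin 2) ℂ) (hA : IsUnit A.det) :
    (IsGES ((Submodule.span ℂ (Set.range (spanningVec n A)))ᗮ) ∧
      Module.finrank ℂ
        ((Submodule.span ℂ (Set.range (spanningVec n A)))ᗮ :
          Submodule ℂ (EuclideanSpace ℂ (Fin (n + 1) → Fin 2))) = 2 ^ n - 1) ↔
    ∀ S : Finset (Fin (n + 1)), S.Nonempty → S ≠ Finset.univ →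
      S ≠ {0} → S ≠ ({0} : Finset (Fin (n + 1)))ᶜ →
      ∀ β : ({i // i ∈ S} → Fin 2) → ℂ, β ≠ 0 →
        (Xmat n A S β).rank = Fintype.card ({i // i ∉ S} → Fin 2) := by
  rw [span_range_spanningVec]
  simp_rw [Matrix.rank_eq_card_iff]
  constructor
  · rintro ⟨hges, -⟩ S hS hSuniv - - β hβ χ hX
    by_contra hχ
    obtain ⟨ψ, hψV, hψ, hbi⟩ := (exists_isBiproduct_iff_vecMul_Xmat_eq_zero A S).2 ⟨β, hβ, χ, hχ, hX⟩
    exact (hges ψ hψV hψ).2 S hS hSuniv hbi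
  · intro hX
    refine ⟨fun ψ hψV hψ => ⟨hψ, fun S hS hSuniv hbi => ?_⟩,
      finrank_orthogonal_span_range_spanningCoeff A hA⟩
    by_cases h0 : S = {0}
    · exact not_isBiproduct_singleton_zero A hA hψV hψ (h0 ▸ hbi)
    by_cases h0c : S = {0}ᶜ
    · exact not_isBiproduct_singleton_zero A hA hψV hψ
        (compl_compl ({0} : Finset (Fin (n + 1))) ▸ h0c ▸ hbi.compl)
    obtain ⟨β, hβ, χ, hχ, hXβ⟩ := (exists_isBiproduct_iff_vecMul_Xmat_eq_zero A S).1 ⟨ψ, hψV, hψ, hbi⟩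
    exact hχ (hX S hS hSuniv h0 h0c β hβ χ hXβ)

/-- STATEMENT 4 (Theorem 1 of the paper), for `n + 1 ≥ 3` qubits: the orthocomplement
`𝒱` of the span of the vectors `(1,α) ⊗ 𝒜(1,α,…,α^{2ⁿ−1})` is a GES of dimension
`2ⁿ − 1` iff for every bipartition `S|S̄` other than `{A₁}|{A₂,…,A_{n+1}}` and every
nonzero `β`, the matrix `𝒳_σ(β)` has full rank `2^{|S̄|}`. -/
theorem GES_iff_Xmat_full_rank (n : ℕ) (hn : 2 ≤ n)
    (A : Matrix (Fin n → Fin 2) (Fin n → Fin 2) ℂ) (hA : IsUnit A.det) :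
    (IsGES ((Submodule.span ℂ (Set.range (spanningVec n A)))ᗮ) ∧
      Module.finrank ℂ
        ((Submodule.span ℂ (Set.range (spanningVec n A)))ᗮ :
          Submodule ℂ (EuclideanSpace ℂ (Fin (n + 1) → Fin 2))) = 2 ^ n - 1) ↔
    ∀ S : Finset (Fin (n + 1)), S.Nonempty → S ≠ Finset.univ →
      S ≠ {0} → S ≠ ({0} : Finset (Fin (n + 1)))ᶜ →
      ∀ β : ({i // i ∈ S} → Fin 2) → ℂ, β ≠ 0 →
        (Xmat n A S β).rank = Fintype.card ({i // i ∉ S} → Fin 2) :=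
  GES_iff_Xmat_full_rank_general n A hA
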